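/- arXiv:2405.07214 — 2 statements merged into one kernel-verified Lean document; each statement's English description precedes it below -/
import Mathlib

section
/- Let f : B_1 → ℝ be measurable with f ∈ L^1(B_1), and suppose ⨍_{B_r} |f - f_{B_r}| ≤ K r^α for all 0 < r < 1, where f_{B_r} = ⨍_{B_r} f, K > 0, and 0 < α < 1. Then there exists a constant a_0 such that ⨍_{B_r} |f - a_0| ≤ C K r^α for all 0 < r < 1, where C depends only on n and α. -/
/-!
Averages over two balls `B_s ⊆ B_r` with `s ≤ r ≤ 2s` differ by at most `2ⁿ` times the mean
oscillation on `B_r`, hence by `2ⁿ K r^α`. Along the dyadic radii `2^{-m}` these increments are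
geometric, so the averages converge to some `a₀` at rate `r^α`; every radius lies within a factor
`2` of a dyadic one, and `⨍_{B_r} |f - a₀| ≤ ⨍_{B_r} |f - f_{B_r}| + |f_{B_r} - a₀|`.
-/

open MeasureTheory Metric

noncomputable section

abbrev Euc (n : ℕ) := EuclideanSpace ℝ (Fin n)

section SetAverage

variable {α : Type*} [MeasurableSpace α] {μ : Measure α} {s t : Set α}

theorem abs_setAverage_sub_le {f : α → ℝ} (h0 : μ s ≠ 0) (hs : μ s ≠ ⊤)
    (hf : IntegrableOn f s μ) (b : ℝ) :
    |(⨍ x in s, f x ∂μ) - b| ≤ ⨍ x in s, |f x - b| ∂μ := by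
  have hfb : IntegrableOn (fun x => |f x - b|) s μ := (hf.sub (integrableOn_const hs)).abs
  simpa only [Function.comp_def, Real.dist_eq] using
    (convexOn_univ_dist b).map_set_average_le (continuous_id.dist continuous_const).continuousOn
      isClosed_univ h0 hs (by simp) hf (by simpa only [Function.comp_def, Real.dist_eq] using hfb)

theorem setAverage_abs_sub_le_add {f : α → ℝ} (h0 : μ s ≠ 0) (hs : μ s ≠ ⊤)
    (hf : IntegrableOn f s μ) (a b : ℝ) :
    ⨍ x in s, |f x - b| ∂μ ≤ (⨍ x in s, |f x - a| ∂μ) + |a - b| := by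
  have hfa : IntegrableOn (fun x => |f x - a|) s μ := (hf.sub (integrableOn_const hs)).abs
  have hfb : IntegrableOn (fun x => |f x - b|) s μ := (hf.sub (integrableOn_const hs)).abs
  rw [← setAverage_const h0 hs |a - b|, setAverage_eq, setAverage_eq, setAverage_eq, ← smul_add,
    ← integral_add hfa (integrableOn_const hs)]
  exact smul_le_smul_of_nonneg_left
    (integral_mono hfb (hfa.add (integrableOn_const hs)) fun x => abs_sub_le _ _ _) (by positivity)

theorem setAverage_le_mul_setAverage_of_subset {g : α → ℝ} (hst : s ⊆ t) (ht : μ t ≠ ⊤)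
    (hg : IntegrableOn g t μ) (hg0 : 0 ≤ᵐ[μ.restrict t] g) :
    ⨍ x in s, g x ∂μ ≤ (μ.real t / μ.real s) * ⨍ x in t, g x ∂μ := by
  rw [setAverage_eq, setAverage_eq, smul_eq_mul, smul_eq_mul]
  rcases (measureReal_nonneg : 0 ≤ μ.real s).eq_or_lt with hs0 | hs0
  · simp [← hs0]
  have ht0 : 0 < μ.real t := hs0.trans_le (measureReal_mono hst ht)
  calc (μ.real s)⁻¹ * ∫ x in s, g x ∂μ ≤ (μ.real s)⁻¹ * ∫ x in t, g x ∂μ :=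
        mul_le_mul_of_nonneg_left (setIntegral_mono_set hg hg0 hst.eventuallyLE)
          (by positivity)
    _ = μ.real t / μ.real s * ((μ.real t)⁻¹ * ∫ x in t, g x ∂μ) := by
        field_simp

end SetAverage

section Ball

variable {E : Type*} [NormedAddCommGroup E] [NormedSpace ℝ E] [FiniteDimensional ℝ E]
  [MeasurableSpace E] [BorelSpace E] (μ : Measure E) [μ.IsAddHaarMeasure]

theorem addHaar_real_ball_div_addHaar_real_ball (x : E) {s t : ℝ} (hs : 0 < s) (ht : 0 < t) :
    μ.real (ball x t) / μ.real (ball x s) = (t / s) ^ Module.finrank ℝ E := by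
  have h1 : 0 < (μ (ball (0 : E) 1)).toReal :=
    ENNReal.toReal_pos (measure_ball_pos μ _ one_pos).ne' measure_ball_lt_top.ne
  simp only [measureReal_def, Measure.addHaar_ball_of_pos μ x hs,
    Measure.addHaar_ball_of_pos μ x ht, ENNReal.toReal_mul,
    ENNReal.toReal_ofReal (pow_nonneg hs.le _), ENNReal.toReal_ofReal (pow_nonneg ht.le _), div_pow]
  field_simp

theorem setAverage_ball_le_pow_mul_setAverage_ball {g : E → ℝ} (x : E) {s t : ℝ} (hs : 0 < s)
    (hst : s ≤ t) (hg : IntegrableOn g (ball x t) μ) (hg0 : ∀ y, 0 ≤ g y) :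
    ⨍ y in ball x s, g y ∂μ ≤ (t / s) ^ Module.finrank ℝ E * ⨍ y in ball x t, g y ∂μ := by
  rw [← addHaar_real_ball_div_addHaar_real_ball μ x hs (hs.trans_le hst)]
  exact setAverage_le_mul_setAverage_of_subset (ball_subset_ball hst) measure_ball_lt_top.ne hg
    (ae_of_all _ hg0)

theorem abs_setAverage_ball_sub_setAverage_ball_le {f : E → ℝ} (x : E) {s t : ℝ} (hs : 0 < s)
    (hst : s ≤ t) (hf : IntegrableOn f (ball x t) μ) :
    |(⨍ y in ball x s, f y ∂μ) - ⨍ y in ball x t, f y ∂μ| ≤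
      (t / s) ^ Module.finrank ℝ E * ⨍ y in ball x t, |f y - ⨍ z in ball x t, f z ∂μ| ∂μ := by
  set c := ⨍ z in ball x t, f z ∂μ
  calc |(⨍ y in ball x s, f y ∂μ) - c| ≤ ⨍ y in ball x s, |f y - c| ∂μ :=
        abs_setAverage_sub_le (measure_ball_pos μ x hs).ne' measure_ball_lt_top.ne
          (hf.mono_set (ball_subset_ball hst)) c
    _ ≤ _ := setAverage_ball_le_pow_mul_setAverage_ball μ x hs hst
          (hf.sub (integrableOn_const measure_ball_lt_top.ne)).abs fun y => abs_nonneg _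

end Ball

theorem exists_dist_le_rpow_of_dist_le_rpow_of_le_two_mul {X : Type*} [PseudoMetricSpace X]
    [CompleteSpace X] (A : ℝ → X) {M α : ℝ} (hα : 0 < α)
    (hA : ∀ s r, 0 < s → s ≤ r → r ≤ 2 * s → r < 1 → dist (A s) (A r) ≤ M * r ^ α) :
    ∃ a₀, ∀ r, 0 < r → r < 1 → dist (A r) a₀ ≤ (1 + (1 - 2⁻¹ ^ α)⁻¹) * M * r ^ α := by
  set ρ : ℝ := 2⁻¹ ^ α
  have hρ : ρ < 1 := Real.rpow_lt_one (by norm_num) (by norm_num) hα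
  have hM : 0 ≤ M := by
    have := (dist_nonneg).trans (hA 2⁻¹ 2⁻¹ (by norm_num) le_rfl (by norm_num) (by norm_num))
    exact nonneg_of_mul_nonneg_left this (by positivity)
  have hscale : ∀ m : ℕ, ((2⁻¹ : ℝ) ^ (m + 1)) ^ α = ρ * ρ ^ m := fun m => by
    rw [← Real.rpow_pow_comm (by norm_num), pow_succ']
  set a : ℕ → X := fun m => A (2⁻¹ ^ (m + 1))
  have hstep : ∀ m, dist (a m) (a (m + 1)) ≤ M * ρ * ρ ^ m := fun m => by
    rw [dist_comm, mul_assoc, ← hscale]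
    exact hA _ _ (by positivity) (pow_le_pow_of_le_one (by norm_num) (by norm_num) (by omega))
      (le_of_eq (by ring)) (pow_lt_one₀ (by norm_num) (by norm_num) (by omega))
  obtain ⟨a₀, ha₀⟩ := cauchySeq_tendsto_of_complete (cauchySeq_of_le_geometric ρ _ hρ hstep)
  refine ⟨a₀, fun r hr0 hr1 => ?_⟩
  obtain ⟨m, hmr, hrm⟩ := exists_nat_pow_near_of_lt_one hr0 hr1.le (by norm_num)
    (by norm_num : (2⁻¹ : ℝ) < 1)
  have hsr : M * ρ * ρ ^ m ≤ M * r ^ α := by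
    rw [mul_assoc, ← hscale]
    gcongr
  calc dist (A r) a₀ ≤ dist (a m) (A r) + dist (a m) a₀ := dist_triangle_left _ _ _
    _ ≤ M * r ^ α + M * ρ * ρ ^ m / (1 - ρ) := by
        gcongr
        · exact hA _ _ (by positivity) hmr.le (hrm.trans_eq (by ring)) hr1
        · exact dist_le_of_le_geometric_of_tendsto ρ _ hρ hstep ha₀ m
    _ ≤ M * r ^ α + M * r ^ α / (1 - ρ) := by gcongr
    _ = (1 + (1 - ρ)⁻¹) * M * r ^ α := by ring

theorem pointwise_Calpha_of_oscillation_decay_general (n : ℕ) (α : ℝ) (hα0 : 0 < α) :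
    ∃ C > 0, ∀ f : Euc n → ℝ, IntegrableOn f (ball (0 : Euc n) 1) →
      ∀ K : ℝ, 0 < K →
      (∀ r : ℝ, 0 < r → r < 1 →
        (⨍ x in ball (0 : Euc n) r, |f x - ⨍ y in ball (0 : Euc n) r, f y|) ≤ K * r ^ α) →
      ∃ a₀ : ℝ, ∀ r : ℝ, 0 < r → r < 1 →
        (⨍ x in ball (0 : Euc n) r, |f x - a₀|) ≤ C * K * r ^ α := by
  have hρ : (2⁻¹ : ℝ) ^ α < 1 := Real.rpow_lt_one (by norm_num) (by norm_num) hα0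
  refine ⟨1 + (1 + (1 - 2⁻¹ ^ α)⁻¹) * 2 ^ n, by have := sub_pos.2 hρ; positivity, ?_⟩
  intro f hf K hK hosc
  set A : ℝ → ℝ := fun r => ⨍ x in ball (0 : Euc n) r, f x
  have hf_ball : ∀ {r : ℝ}, r < 1 → IntegrableOn f (ball 0 r) :=
    fun hr => hf.mono_set (ball_subset_ball hr.le)
  have hdyadic : ∀ s r, 0 < s → s ≤ r → r ≤ 2 * s → r < 1 →
      dist (A s) (A r) ≤ 2 ^ n * K * r ^ α := by
    intro s r hs hsr hr2 hr1
    have hr0 : 0 < r := hs.trans_le hsr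
    calc dist (A s) (A r)
        ≤ (r / s) ^ n * ⨍ x in ball (0 : Euc n) r, |f x - A r| := by
          simpa only [Real.dist_eq, finrank_euclideanSpace_fin] using
            abs_setAverage_ball_sub_setAverage_ball_le volume 0 hs hsr (hf_ball hr1)
      _ ≤ 2 ^ n * (K * r ^ α) :=
          mul_le_mul_of_nonneg
            (pow_le_pow_left₀ (by positivity) ((div_le_iff₀ hs).2 (by linarith)) n)
            (hosc r hr0 hr1) (by positivity) (by positivity)
      _ = 2 ^ n * K * r ^ α := by ring
  obtain ⟨a₀, ha₀⟩ := exists_dist_le_rpow_of_dist_le_rpow_of_le_two_mul A hα0 hdyadic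
  refine ⟨a₀, fun r hr0 hr1 => ?_⟩
  calc ⨍ x in ball (0 : Euc n) r, |f x - a₀|
      ≤ (⨍ x in ball (0 : Euc n) r, |f x - A r|) + |A r - a₀| :=
        setAverage_abs_sub_le_add (measure_ball_pos _ _ hr0).ne' measure_ball_lt_top.ne
          (hf_ball hr1) _ _
    _ ≤ K * r ^ α + (1 + (1 - 2⁻¹ ^ α)⁻¹) * (2 ^ n * K) * r ^ α :=
        add_le_add (hosc r hr0 hr1) (ha₀ r hr0 hr1)
    _ = (1 + (1 + (1 - 2⁻¹ ^ α)⁻¹) * 2 ^ n) * K * r ^ α := by ring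

/-- If `f ∈ L¹(B₁)` and `⨍_{B_r}|f - f_{B_r}| ≤ K r^α` for all `0 < r < 1`, then there exists
a constant `a₀` with `⨍_{B_r}|f - a₀| ≤ C K r^α` for all `0 < r < 1`, where `C = C(n,α)`. -/
theorem pointwise_Calpha_of_oscillation_decay (n : ℕ) (α : ℝ) (hα0 : 0 < α) (hα1 : α < 1) :
    ∃ C > 0, ∀ f : Euc n → ℝ, IntegrableOn f (ball (0 : Euc n) 1) →
      ∀ K : ℝ, 0 < K →
      (∀ r : ℝ, 0 < r → r < 1 →
        (⨍ x in ball (0 : Euc n) r, |f x - ⨍ y in ball (0 : Euc n) r, f y|) ≤ K * r ^ α) →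
      ∃ a₀ : ℝ, ∀ r : ℝ, 0 < r → r < 1 →
        (⨍ x in ball (0 : Euc n) r, |f x - a₀|) ≤ C * K * r ^ α :=
  pointwise_Calpha_of_oscillation_decay_general n α hα0
end
end

section
/- Let f ∈ L^∞(B_1), k ≥ 0, 0 < α ≤ 1, and suppose there is a constant K such that for every x_0 ∈ B_1 there exists a polynomial P_{x_0} of degree ≤ k with sup_{B_r(x_0) ∩ B_1} |f - P_{x_0}| ≤ K r^{k+α} for all 0 < r < 1. Then for any x_0, x ∈ B_1 with r = |x - x_0| < 1/4, one has Σ_{i=0}^{k} r^i sup_{B_r(x_0) ∩ B_1} |D^i P_x - D^i P_{x_0}| ≤ C K r^{k+α}, where C depends only on n and k. -/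
open MeasureTheory Metric

noncomputable section

/-- `P` is (the function given by) a polynomial on `ℝ^n` of total degree at most `k`. -/
def IsPolyDeg (n k : ℕ) (P : Euc n → ℝ) : Prop :=
  ∃ q : MvPolynomial (Fin n) ℝ, q.totalDegree ≤ k ∧ ∀ x : Euc n, P x = MvPolynomial.eval (fun i => x i) q


/-!
The difference `Q = P x - P x₀` is a polynomial of degree `≤ k`, and on
`B_r(x₀) ∩ B₁ ⊆ B_{2r}(x) ∩ B₁` it is bounded by `|f - P x₀| + |f - P x| ≤ (1 + 2^(k+1)) K r^(k+α)`.
That set contains the ball of radius `r/2` about `(1 - r/2) x₀`, whose concentric ball of radius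
`3r/2` contains `B_r(x₀)`. Since a polynomial vanishing on a ball vanishes identically, the sup of
`|Q|` on the unit ball is a norm on the finite-dimensional space of polynomials of degree `≤ k`,
so it dominates the sup of `‖DⁱQ‖` on the ball of radius `3`; rescaling the ball of radius `r/2`
to the unit ball turns this into `rⁱ ‖DⁱQ‖ ≤ C K r^(k+α)` on `B_r(x₀)`.
-/

open Set Function Topology

theorem LinearMap.exists_norm_le_mul_norm_of_injective {𝕜 V F G : Type*}
    [NontriviallyNormedField 𝕜] [CompleteSpace 𝕜] [AddCommGroup V] [Module 𝕜 V]
    [FiniteDimensional 𝕜 V] [NormedAddCommGroup F] [NormedSpace 𝕜 F] [NormedAddCommGroup G]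
    [NormedSpace 𝕜 G] {T : V →ₗ[𝕜] F} (hT : Injective T) (S : V →ₗ[𝕜] G) :
    ∃ C, 0 ≤ C ∧ ∀ v, ‖S v‖ ≤ C * ‖T v‖ := by
  let e := LinearEquiv.ofInjective T hT
  obtain ⟨C, hC0, hC⟩ := (LinearMap.toContinuousLinearMap (S ∘ₗ e.symm.toLinearMap)).bound
  refine ⟨C, hC0.le, fun v => ?_⟩
  simpa [e] using hC (e v)

theorem exists_norm_iteratedFDeriv_le_of_finiteDimensional {E : Type*} [NormedAddCommGroup E]
    [NormedSpace ℝ E] (V : Submodule ℝ (E → ℝ)) [FiniteDimensional ℝ V] (i : ℕ)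
    (hV : ∀ P ∈ V, ContDiff ℝ i P) {s t : Set E} (hs : IsCompact s) (hs₀ : s.Nonempty)
    (ht : IsCompact t) (hV_eq : ∀ P ∈ V, EqOn P 0 s → P = 0) :
    ∃ C, 0 ≤ C ∧ ∀ P ∈ V, ∀ m, (∀ y ∈ s, |P y| ≤ m) →
      ∀ w ∈ t, ‖iteratedFDeriv ℝ i P w‖ ≤ C * m := by
  have := isCompact_iff_compactSpace.mp hs
  have := isCompact_iff_compactSpace.mp ht
  have : Nonempty s := hs₀.to_subtype
  let T : V →ₗ[ℝ] C(s, ℝ) :=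
    { toFun := fun P => ⟨fun y => P.1 y, (hV P P.2).continuous.comp continuous_subtype_val⟩
      map_add' := fun _ _ => rfl
      map_smul' := fun _ _ => rfl }
  let S : V →ₗ[ℝ] C(t, ContinuousMultilinearMap ℝ (fun _ : Fin i => E) ℝ) :=
    { toFun := fun P => ⟨fun w => iteratedFDeriv ℝ i P.1 w,
        ((hV P P.2).continuous_iteratedFDeriv le_rfl).comp continuous_subtype_val⟩
      map_add' := fun P Q => by
        ext1 w
        exact iteratedFDeriv_add_apply (hV P P.2).contDiffAt (hV Q Q.2).contDiffAt
      map_smul' := fun a P => by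
        ext1 w
        exact iteratedFDeriv_const_smul_apply (hV P P.2).contDiffAt }
  have hT : Injective T := by
    refine (injective_iff_map_eq_zero T).2 fun P hP => Subtype.ext (hV_eq P P.2 fun y hy => ?_)
    exact DFunLike.congr_fun hP ⟨y, hy⟩
  obtain ⟨C, hC0, hC⟩ := LinearMap.exists_norm_le_mul_norm_of_injective
    (G := C(t, ContinuousMultilinearMap ℝ (fun _ : Fin i => E) ℝ)) hT S
  refine ⟨C, hC0, fun P hP m hm w hw => ?_⟩
  calc ‖iteratedFDeriv ℝ i P w‖ = ‖S ⟨P, hP⟩ ⟨w, hw⟩‖ := rfl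
    _ ≤ ‖S ⟨P, hP⟩‖ := (S ⟨P, hP⟩).norm_coe_le_norm _
    _ ≤ C * ‖T ⟨P, hP⟩‖ := hC _
    _ ≤ C * m := by
      gcongr
      exact (ContinuousMap.norm_le_of_nonempty _).2 fun y => hm y y.2

theorem norm_iteratedFDeriv_comp_add_smul {𝕜 E F : Type*} [NontriviallyNormedField 𝕜]
    [NormedAddCommGroup E] [NormedSpace 𝕜 E] [NormedAddCommGroup F] [NormedSpace 𝕜 F]
    {f : E → F} {i : ℕ} (hf : ContDiff 𝕜 i f) (z : E) (c : 𝕜) (y : E) :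
    ‖iteratedFDeriv 𝕜 i (fun y => f (z + c • y)) y‖ =
      ‖c‖ ^ i * ‖iteratedFDeriv 𝕜 i f (z + c • y)‖ := by
  rw [congrFun (iteratedFDeriv_comp_const_smul (f := fun u => f (z + u)) c
    (hf.comp (contDiff_const.add contDiff_id))) y, iteratedFDeriv_comp_add_left, norm_smul,
    norm_pow]

section Geometry

variable {E : Type*} [NormedAddCommGroup E] [NormedSpace ℝ E] {x₀ : E} {r : ℝ}

theorem closedBall_subset_ball_inter_ball (hx₀ : x₀ ∈ ball (0 : E) 1) (hr : 0 < r)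
    (hr₂ : r < 2) : closedBall ((1 - r / 2) • x₀) (r / 2) ⊆ ball x₀ r ∩ ball 0 1 := by
  intro w hw
  rw [mem_ball_zero_iff] at hx₀
  rw [mem_closedBall, dist_eq_norm] at hw
  have hz : ‖(1 - r / 2) • x₀‖ = (1 - r / 2) * ‖x₀‖ := by
    rw [norm_smul, Real.norm_of_nonneg (by linarith)]
  have hzx₀ : ‖(1 - r / 2) • x₀ - x₀‖ = r / 2 * ‖x₀‖ := by
    rw [show (1 - r / 2) • x₀ - x₀ = (-(r / 2)) • x₀ by module, norm_smul, norm_neg,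
      Real.norm_of_nonneg (by positivity)]
  constructor
  · rw [mem_ball, dist_eq_norm]
    calc ‖w - x₀‖ ≤ ‖w - (1 - r / 2) • x₀‖ + ‖(1 - r / 2) • x₀ - x₀‖ :=
          norm_sub_le_norm_sub_add_norm_sub _ _ _
      _ < r := by nlinarith
  · rw [mem_ball_zero_iff]
    calc ‖w‖ ≤ ‖(1 - r / 2) • x₀‖ + ‖w - (1 - r / 2) • x₀‖ := norm_le_norm_add_norm_sub' _ _
      _ < 1 := by nlinarith

theorem ball_subset_closedBall_smul (hx₀ : x₀ ∈ ball (0 : E) 1) (hr : 0 ≤ r) :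
    ball x₀ r ⊆ closedBall ((1 - r / 2) • x₀) (3 * (r / 2)) := by
  intro w hw
  rw [mem_ball_zero_iff] at hx₀
  rw [mem_ball, dist_eq_norm] at hw
  have hzx₀ : ‖x₀ - (1 - r / 2) • x₀‖ = r / 2 * ‖x₀‖ := by
    rw [show x₀ - (1 - r / 2) • x₀ = (r / 2) • x₀ by module, norm_smul,
      Real.norm_of_nonneg (by positivity)]
  rw [mem_closedBall, dist_eq_norm]
  calc ‖w - (1 - r / 2) • x₀‖ ≤ ‖w - x₀‖ + ‖x₀ - (1 - r / 2) • x₀‖ :=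
        norm_sub_le_norm_sub_add_norm_sub _ _ _
    _ ≤ 3 * (r / 2) := by nlinarith

end Geometry

theorem Real.mul_biSup_le {α : Type*} {S : Set α} {g : α → ℝ} {c B : ℝ} (hc : 0 ≤ c)
    (hB : 0 ≤ B) (h : ∀ y ∈ S, c * g y ≤ B) : c * ⨆ y ∈ S, g y ≤ B := by
  rw [Real.mul_iSup_of_nonneg hc]
  refine Real.iSup_le (fun y => ?_) hB
  rw [Real.mul_iSup_of_nonneg hc]
  exact Real.iSup_le (h y) hB

theorem abs_sub_le_of_biSup_le {E : Type*} [PseudoMetricSpace E] [ProperSpace E]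
    {f P : E → ℝ} {M B : ℝ} (hf : ∀ x, |f x| ≤ M) (hP : Continuous P) {S : Set E}
    (hS : Bornology.IsBounded S) (h : ⨆ y ∈ S, |f y - P y| ≤ B) {y : E} (hy : y ∈ S) :
    |f y - P y| ≤ B := by
  obtain ⟨C, hC⟩ := hS.isCompact_closure.exists_bound_of_continuousOn hP.continuousOn
  refine le_trans (le_ciSup₂ (f := fun y (_ : y ∈ S) => |f y - P y|) ⟨M + C, ?_⟩ y hy) h
  simp only [upperBounds, mem_iUnion, mem_range, mem_ofPred_eq]
  rintro _ ⟨x, hx, rfl⟩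
  exact (abs_sub _ _).trans (add_le_add (hf x) (hC x (subset_closure hx)))

theorem abs_sub_le_of_approx {E : Type*} [PseudoMetricSpace E] {U : Set E} {f : E → ℝ}
    {P : E → E → ℝ} {K s : ℝ}
    (hP : ∀ x₀ ∈ U, ∀ ρ, 0 < ρ → ρ < 1 → ∀ y ∈ ball x₀ ρ ∩ U, |f y - P x₀ y| ≤ K * ρ ^ s)
    {x₀ x : E} (hx₀ : x₀ ∈ U) (hx : x ∈ U) (hr : dist x x₀ < 1 / 2) {y : E}
    (hy : y ∈ ball x₀ (dist x x₀) ∩ U) :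
    |P x y - P x₀ y| ≤ (1 + 2 ^ s) * K * dist x x₀ ^ s := by
  set r := dist x x₀
  have hr₀ : 0 < r := dist_nonneg.trans_lt (mem_ball.1 hy.1)
  have hy' : y ∈ ball x (2 * r) ∩ U := by
    refine ⟨mem_ball.2 ?_, hy.2⟩
    linarith [dist_triangle y x₀ x, dist_comm x₀ x, mem_ball.1 hy.1]
  calc |P x y - P x₀ y| ≤ |f y - P x₀ y| + |f y - P x y| :=
        (abs_sub_le _ (f y) _).trans_eq (by rw [abs_sub_comm, add_comm])
    _ ≤ K * r ^ s + K * (2 * r) ^ s :=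
        add_le_add (hP x₀ hx₀ r hr₀ (by linarith) y hy)
          (hP x hx _ (by linarith) (by linarith) y hy')
    _ = (1 + 2 ^ s) * K * r ^ s := by rw [Real.mul_rpow zero_le_two hr₀.le]; ring

open MvPolynomial

theorem MvPolynomial.totalDegree_bind₁_le {σ τ R : Type*} [CommSemiring R]
    {g : σ → MvPolynomial τ R} (hg : ∀ i, (g i).totalDegree ≤ 1) (p : MvPolynomial σ R) :
    (bind₁ g p).totalDegree ≤ p.totalDegree := by
  conv_lhs => rw [p.as_sum, map_sum]
  refine (totalDegree_finsetSum _ _).trans (Finset.sup_le fun d hd => ?_)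
  rw [bind₁_monomial]
  calc (C (p.coeff d) * ∏ i ∈ d.support, g i ^ d i).totalDegree
      ≤ ∑ i ∈ d.support, (g i ^ d i).totalDegree :=
        (totalDegree_mul _ _).trans
          (by rw [totalDegree_C, zero_add]; exact totalDegree_finsetProd _ _)
    _ ≤ ∑ i ∈ d.support, d i := Finset.sum_le_sum fun i _ =>
        (totalDegree_pow _ _).trans (by simpa using Nat.mul_le_mul_left (d i) (hg i))
    _ ≤ p.totalDegree := le_totalDegree hd

def polyDeg (n k : ℕ) : Submodule ℝ (Euc n → ℝ) :=
  (restrictTotalDegree (Fin n) ℝ k).map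
    (LinearMap.pi fun x : Euc n => (aeval fun i => x i).toLinearMap)

theorem mem_polyDeg {n k : ℕ} {P : Euc n → ℝ} : P ∈ polyDeg n k ↔ IsPolyDeg n k P := by
  simp [polyDeg, IsPolyDeg, mem_restrictTotalDegree, _root_.funext_iff, eq_comm]

instance (n k : ℕ) : FiniteDimensional ℝ (polyDeg n k) := Module.Finite.map _ _

namespace IsPolyDeg

variable {n k : ℕ} {P Q : Euc n → ℝ}

theorem analyticOnNhd (hP : IsPolyDeg n k P) : AnalyticOnNhd ℝ P univ := by
  obtain ⟨q, -, hq⟩ := hP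
  rw [show P = fun x => eval (fun i => EuclideanSpace.proj (𝕜 := ℝ) i x) q from funext hq]
  exact AnalyticOnNhd.eval_continuousLinearMap' _ q

theorem contDiff (hP : IsPolyDeg n k P) {m : WithTop ℕ∞} : ContDiff ℝ m P :=
  hP.analyticOnNhd.contDiff

theorem continuous (hP : IsPolyDeg n k P) : Continuous P :=
  (hP.contDiff (m := 0)).continuous

theorem sub (hP : IsPolyDeg n k P) (hQ : IsPolyDeg n k Q) : IsPolyDeg n k (P - Q) :=
  mem_polyDeg.1 (sub_mem (mem_polyDeg.2 hP) (mem_polyDeg.2 hQ))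

theorem comp_add_smul (hP : IsPolyDeg n k P) (z : Euc n) (c : ℝ) :
    IsPolyDeg n k fun y => P (z + c • y) := by
  obtain ⟨q, hqk, hq⟩ := hP
  refine ⟨bind₁ (fun i => C (z i) + C c * X i) q,
    (totalDegree_bind₁_le (fun i => ?_) q).trans hqk, fun y => ?_⟩
  · refine (totalDegree_add _ _).trans (max_le (by simp) ((totalDegree_mul _ _).trans ?_))
    simp [totalDegree_C, totalDegree_X]
  · dsimp only
    rw [hq, MvPolynomial.eval, MvPolynomial.eval, eval₂Hom_bind₁]
    exact congrArg (fun g => eval₂Hom _ g q) (funext fun i => by simp)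

theorem eq_zero_of_eqOn (hP : IsPolyDeg n k P) {s : Set (Euc n)} (hs : (interior s).Nonempty)
    (h : EqOn P 0 s) : P = 0 := by
  obtain ⟨z, hz⟩ := hs
  have hz : P =ᶠ[𝓝 z] 0 := Filter.mem_of_superset (mem_interior_iff_mem_nhds.1 hz) h
  have := hP.analyticOnNhd.eqOn_zero_of_preconnected_of_eventuallyEq_zero isPreconnected_univ
    (mem_univ z) hz
  exact funext fun x => this (mem_univ x)

theorem exists_norm_iteratedFDeriv_le (n k i : ℕ) (R : ℝ) :
    ∃ C, 0 ≤ C ∧ ∀ P, IsPolyDeg n k P → ∀ m, (∀ y ∈ closedBall (0 : Euc n) 1, |P y| ≤ m) →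
      ∀ w ∈ closedBall (0 : Euc n) R, ‖iteratedFDeriv ℝ i P w‖ ≤ C * m := by
  obtain ⟨C, hC0, hC⟩ := exists_norm_iteratedFDeriv_le_of_finiteDimensional (polyDeg n k) i
    (fun P hP => (mem_polyDeg.1 hP).contDiff) (isCompact_closedBall 0 1)
    (nonempty_closedBall.2 zero_le_one) (isCompact_closedBall 0 R)
    (fun P hP => (mem_polyDeg.1 hP).eq_zero_of_eqOn (by simp [interior_closedBall]))
  exact ⟨C, hC0, fun P hP => hC P (mem_polyDeg.2 hP)⟩

theorem exists_pow_mul_norm_iteratedFDeriv_le (n k i : ℕ) (R : ℝ) :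
    ∃ C, 0 ≤ C ∧ ∀ P, IsPolyDeg n k P → ∀ (z : Euc n) (ρ m : ℝ), 0 < ρ →
      (∀ y ∈ closedBall z ρ, |P y| ≤ m) →
      ∀ w ∈ closedBall z (R * ρ), ρ ^ i * ‖iteratedFDeriv ℝ i P w‖ ≤ C * m := by
  obtain ⟨C, hC0, hC⟩ := exists_norm_iteratedFDeriv_le n k i R
  refine ⟨C, hC0, fun P hP z ρ m hρ hm w hw => ?_⟩
  have hw' : w = z + ρ • ρ⁻¹ • (w - z) := by simp [smul_smul, hρ.ne']
  have hscale := norm_iteratedFDeriv_comp_add_smul (i := i) hP.contDiff z ρ (ρ⁻¹ • (w - z))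
  rw [← hw', Real.norm_eq_abs, abs_of_pos hρ] at hscale
  rw [← hscale]
  refine hC _ (hP.comp_add_smul z ρ) m (fun y hy => hm _ ?_) _ ?_
  · simpa [norm_smul, abs_of_pos hρ] using
      mul_le_of_le_one_right hρ.le (mem_closedBall_zero_iff.1 hy)
  · rw [mem_closedBall_zero_iff, norm_smul, ← dist_eq_norm, norm_inv, Real.norm_eq_abs,
      abs_of_pos hρ, inv_mul_le_iff₀ hρ, mul_comm]
    exact mem_closedBall.1 hw

theorem exists_pow_mul_norm_iteratedFDeriv_le_of_ball_inter (n k i : ℕ) :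
    ∃ C, 0 ≤ C ∧ ∀ P, IsPolyDeg n k P → ∀ (x₀ : Euc n) (r m : ℝ), x₀ ∈ ball 0 1 → 0 < r →
      r < 2 → (∀ y ∈ ball x₀ r ∩ ball 0 1, |P y| ≤ m) →
      ∀ w ∈ ball x₀ r, r ^ i * ‖iteratedFDeriv ℝ i P w‖ ≤ C * m := by
  obtain ⟨C, hC0, hC⟩ := exists_pow_mul_norm_iteratedFDeriv_le n k i 3
  refine ⟨2 ^ i * C, by positivity, fun P hP x₀ r m hx₀ hr hr₂ hm w hw => ?_⟩
  have hw' := hC P hP _ (r / 2) m (by positivity)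
    (fun y hy => hm y (closedBall_subset_ball_inter_ball hx₀ hr hr₂ hy)) w
    (ball_subset_closedBall_smul hx₀ hr.le hw)
  calc r ^ i * ‖iteratedFDeriv ℝ i P w‖
      = 2 ^ i * ((r / 2) ^ i * ‖iteratedFDeriv ℝ i P w‖) := by rw [div_pow]; field_simp
    _ ≤ 2 ^ i * C * m := by rw [mul_assoc]; gcongr

end IsPolyDeg

/-- If `f ∈ L^∞(B₁)` admits at each `x₀ ∈ B₁` a degree-`k` polynomial `P x₀` with
`sup_{B_r(x₀)∩B₁} |f - P x₀| ≤ K r^{k+α}` for all `0 < r < 1`, then for `x, x₀ ∈ B₁` with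
`r = |x-x₀| < 1/4`, `Σ_{i≤k} r^i sup_{B_r(x₀)∩B₁} |D^i P_x - D^i P_{x₀}| ≤ C K r^{k+α}`
with `C = C(n,k)`. -/
theorem poly_approx_comparison (n k : ℕ) :
    ∃ C > 0, ∀ α : ℝ, 0 < α → α ≤ 1 → ∀ (f : Euc n → ℝ) (M : ℝ), (∀ x, |f x| ≤ M) →
      ∀ (K : ℝ) (P : Euc n → Euc n → ℝ),
      (∀ x₀ ∈ ball (0 : Euc n) 1, IsPolyDeg n k (P x₀) ∧
        ∀ r : ℝ, 0 < r → r < 1 →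
          (⨆ y ∈ ball x₀ r ∩ ball (0 : Euc n) 1, |f y - P x₀ y|) ≤ K * r ^ ((k : ℝ) + α)) →
      ∀ x₀ ∈ ball (0 : Euc n) 1, ∀ x ∈ ball (0 : Euc n) 1, dist x x₀ < 1 / 4 →
        (∑ i ∈ Finset.range (k + 1), dist x x₀ ^ i *
            ⨆ y ∈ ball x₀ (dist x x₀) ∩ ball (0 : Euc n) 1,
              ‖iteratedFDeriv ℝ i (P x) y - iteratedFDeriv ℝ i (P x₀) y‖) ≤
          C * K * dist x x₀ ^ ((k : ℝ) + α) := by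
  choose C hC0 hC using IsPolyDeg.exists_pow_mul_norm_iteratedFDeriv_le_of_ball_inter n k
  refine ⟨(1 + 2 ^ (k + 1)) * ∑ i ∈ Finset.range (k + 1), C i + 1,
    add_pos_of_nonneg_of_pos (mul_nonneg (by positivity) (Finset.sum_nonneg fun i _ => hC0 i))
      one_pos, ?_⟩
  intro α hα₀ hα₁ f M hf K P hP x₀ hx₀ x hx hr
  have hpt : ∀ z ∈ ball (0 : Euc n) 1, ∀ ρ, 0 < ρ → ρ < 1 → ∀ y ∈ ball z ρ ∩ ball 0 1,
      |f y - P z y| ≤ K * ρ ^ ((k : ℝ) + α) := fun z hz ρ hρ hρ₁ y hy =>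
    abs_sub_le_of_biSup_le hf (hP z hz).1.continuous (isBounded_ball.subset inter_subset_left)
      ((hP z hz).2 ρ hρ hρ₁) hy
  have hK : 0 ≤ K := nonneg_of_mul_nonneg_left ((abs_nonneg _).trans
    (hpt x₀ hx₀ (1 / 2) (by norm_num) (by norm_num) x₀ ⟨mem_ball_self (by norm_num), hx₀⟩))
    (Real.rpow_pos_of_pos (by norm_num) _)
  have h2s : (2 : ℝ) ^ ((k : ℝ) + α) ≤ 2 ^ (k + 1) := by
    rw [← Real.rpow_natCast]
    exact Real.rpow_le_rpow_of_exponent_le one_le_two (by push_cast; linarith)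
  set r := dist x x₀
  set B := (1 + 2 ^ (k + 1)) * K * r ^ ((k : ℝ) + α) with hB_def
  have hB : 0 ≤ B := by positivity
  have hterm : ∀ i, ∀ y ∈ ball x₀ r ∩ ball 0 1,
      r ^ i * ‖iteratedFDeriv ℝ i (P x) y - iteratedFDeriv ℝ i (P x₀) y‖ ≤ C i * B := by
    intro i y hy
    rw [← iteratedFDeriv_sub_apply (hP x hx).1.contDiff.contDiffAt
      (hP x₀ hx₀).1.contDiff.contDiffAt]
    refine hC i _ ((hP x hx).1.sub (hP x₀ hx₀).1) x₀ r _ hx₀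
      (dist_nonneg.trans_lt (mem_ball.1 hy.1)) (by linarith) (fun y' hy' => ?_) y hy.1
    exact (abs_sub_le_of_approx hpt hx₀ hx (by linarith) hy').trans (by rw [hB_def]; gcongr)
  calc _ ≤ ∑ i ∈ Finset.range (k + 1), C i * B := Finset.sum_le_sum fun i _ =>
        Real.mul_biSup_le (by positivity) (mul_nonneg (hC0 i) hB) (hterm i)
    _ = ((1 + 2 ^ (k + 1)) * ∑ i ∈ Finset.range (k + 1), C i) * K * r ^ ((k : ℝ) + α) := by
        rw [← Finset.sum_mul]; ring
    _ ≤ _ := by gcongr; linarith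
end
end
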